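/- arXiv:1707.08343 — 6 statements merged into one kernel-verified Lean document; each statement's English description precedes it below -/
import Mathlib

section
/- For every real p > 0, every root λ (in ℂ) of the cubic polynomial λ³ + 2λ² + pλ + p has strictly negative real part. -/
theorem roots_neg_re_of_pos_p (p : ℝ) (hp : 0 < p) (z : ℂ)
    (hz : z ^ 3 + 2 * z ^ 2 + (p : ℂ) * z + (p : ℂ) = 0) :
    z.re < 0 := by
  by_contra h
  push_neg at h
  set x := z.re with hx
  set y := z.im with hyy
  have h1 : x ^ 3 - 3 * x * y ^ 2 + 2 * (x ^ 2 - y ^ 2) + p * x + p = 0 := by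
    have := congrArg Complex.re hz
    simp [Complex.ext_iff, pow_succ, Complex.mul_re, Complex.mul_im] at this
    linarith [this]
  have h2 : y * (3 * x ^ 2 - y ^ 2 + 4 * x + p) = 0 := by
    have := congrArg Complex.im hz
    simp [Complex.ext_iff, pow_succ, Complex.mul_re, Complex.mul_im] at this
    nlinarith [this]
  rcases mul_eq_zero.mp h2 with hy | hy
  · rw [hy] at h1
    nlinarith
  · nlinarith [sq_nonneg x, sq_nonneg y, mul_nonneg h (mul_nonneg h h)]
end

section
/- For every real p < 0, the cubic polynomial λ³ + 2λ² + pλ + p has three real roots, exactly one of which is positive and two of which are negative. -/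
theorem cubic_three_real_roots_of_neg_p (p : ℝ) (hp : p < 0) :
    ∃ x y z : ℝ, x ≠ y ∧ x ≠ z ∧ y ≠ z ∧
      x < 0 ∧ y < 0 ∧ 0 < z ∧
      (∀ t : ℝ, t ^ 3 + 2 * t ^ 2 + p * t + p = (t - x) * (t - y) * (t - z)) := by
  set f : ℝ → ℝ := fun t => t ^ 3 + 2 * t ^ 2 + p * t + p with hf
  have hc : Continuous f := by fun_prop
  -- root x in [p-3, -2]
  have hx : (0 : ℝ) ∈ f '' Set.Icc (p - 3) (-2) := by
    apply intermediate_value_Icc (by linarith) hc.continuousOn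
    constructor
    · show (p - 3) ^ 3 + 2 * (p - 3) ^ 2 + p * (p - 3) + p ≤ 0
      nlinarith [sq_nonneg p, sq_nonneg (p - 1)]
    · show (0 : ℝ) ≤ (-2) ^ 3 + 2 * (-2) ^ 2 + p * (-2) + p
      linarith
  -- root y in [-2, 0]
  have hy : (0 : ℝ) ∈ f '' Set.Icc (-2) 0 := by
    apply intermediate_value_Icc' (by linarith) hc.continuousOn
    constructor
    · show (0 : ℝ) ^ 3 + 2 * (0 : ℝ) ^ 2 + p * 0 + p ≤ 0
      linarith
    · show (0 : ℝ) ≤ (-2) ^ 3 + 2 * (-2) ^ 2 + p * (-2) + p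
      linarith
  -- root z in [0, 1-p]
  have hz : (0 : ℝ) ∈ f '' Set.Icc 0 (1 - p) := by
    apply intermediate_value_Icc (by linarith) hc.continuousOn
    constructor
    · show (0 : ℝ) ^ 3 + 2 * (0 : ℝ) ^ 2 + p * 0 + p ≤ 0
      linarith
    · show (0 : ℝ) ≤ (1 - p) ^ 3 + 2 * (1 - p) ^ 2 + p * (1 - p) + p
      nlinarith [sq_nonneg p, sq_nonneg (p - 1)]
  obtain ⟨x, ⟨hx1, hx2⟩, fx⟩ := hx
  obtain ⟨y, ⟨hy1, hy2⟩, fy⟩ := hy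
  obtain ⟨z, ⟨hz1, hz2⟩, fz⟩ := hz
  simp only [hf] at fx fy fz
  have hxlt : x < -2 := by
    rcases lt_or_eq_of_le hx2 with h | h
    · exact h
    · exfalso; rw [h] at fx; nlinarith
  have hylt1 : -2 < y := by
    rcases lt_or_eq_of_le hy1 with h | h
    · exact h
    · exfalso; rw [← h] at fy; nlinarith
  have hylt2 : y < 0 := by
    rcases lt_or_eq_of_le hy2 with h | h
    · exact h
    · exfalso; rw [h] at fy; nlinarith
  have hzlt : 0 < z := by
    rcases lt_or_eq_of_le hz1 with h | h
    · exact h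
    · exfalso; rw [← h] at fz; nlinarith
  have hxy : x ≠ y := by linarith
  have hxz : x ≠ z := by linarith
  have hyz : y ≠ z := by linarith
  refine ⟨x, y, z, hxy, hxz, hyz, by linarith, hylt2, hzlt, ?_⟩
  have hA : x ^ 2 + x * y + y ^ 2 + 2 * (x + y) + p = 0 := by
    apply mul_left_cancel₀ (sub_ne_zero.mpr hxy)
    linear_combination fx - fy
  have hB : y ^ 2 + y * z + z ^ 2 + 2 * (y + z) + p = 0 := by
    apply mul_left_cancel₀ (sub_ne_zero.mpr hyz)
    linear_combination fy - fz
  have h1 : x + y + z = -2 := by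
    apply mul_left_cancel₀ (sub_ne_zero.mpr hxz)
    linear_combination hA - hB
  have h2 : x * y + x * z + y * z = p := by
    linear_combination -hA + (x + y) * h1
  have h3 : x * y * z = -p := by
    linear_combination fx + x * h2 - x ^ 2 * h1
  intro t
  linear_combination t ^ 2 * h1 + (-t) * h2 + h3
end

section
/- Suppose α₁ < 0, α₃ < 0 are real and β = α₃/α₁ is not an integer. If b₀ : ℝ → ℝ is a C^∞ function satisfying α₃·b₀(t) + α₁·t·(α₂ - b₀'(t)) = 0 for all t, then b₀(t) = (α₂/(1-β))·t for all t. -/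
open Filter Set Real Topology

notation "SM" => ((⊤:ℕ∞) : WithTop ℕ∞)

-- Core lemma: smooth f with t f' = γ f, γ < 0, vanishes on positives.
lemma pos_side (γ : ℝ) (hγ : γ < 0) (f : ℝ → ℝ) (hf : ContDiff ℝ SM f)
    (hode : ∀ t : ℝ, t * deriv f t = γ * f t) : ∀ t > 0, f t = 0 := by
  have hd : Differentiable ℝ f := hf.differentiable (by simp)
  set H : ℝ → ℝ := fun t => f t * t ^ (-γ) with hH
  have hHd : ∀ x ∈ Ioi (0:ℝ), HasDerivAt H 0 x := by
    intro x hx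
    have hx0 : (0:ℝ) < x := hx
    have h1 : HasDerivAt (fun t : ℝ => t ^ (-γ)) (-γ * x ^ (-γ - 1)) x :=
      Real.hasDerivAt_rpow_const (Or.inl hx0.ne')
    have h2 : HasDerivAt H (deriv f x * x ^ (-γ) + f x * (-γ * x ^ (-γ - 1))) x :=
      (hd x).hasDerivAt.mul h1
    have key : deriv f x * x ^ (-γ) + f x * (-γ * x ^ (-γ - 1)) = 0 := by
      have h3 : deriv f x = γ * f x / x := by
        field_simp [hx0.ne']
        linarith [hode x, mul_comm (deriv f x) x]
      have h4 : x ^ (-γ - 1) = x ^ (-γ) / x := by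
        rw [show -γ - 1 = -γ - 1 from rfl, Real.rpow_sub hx0, Real.rpow_one]
      rw [h3, h4]
      field_simp
      ring
    rwa [key] at h2
  have hconst : ∀ t ∈ Ioi (0:ℝ), H t = H 1 := by
    intro t ht
    have hcv : Convex ℝ (Ioi (0:ℝ)) := convex_Ioi 0
    have hdo : DifferentiableOn ℝ H (Ioi 0) := fun x hx =>
      ((hHd x hx).differentiableAt).differentiableWithinAt
    refine hcv.is_const_of_fderivWithin_eq_zero hdo (fun x hx => ?_) ht (by norm_num)
    rw [fderivWithin_of_isOpen isOpen_Ioi hx, (hHd x hx).hasFDerivAt.fderiv]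
    ext y; simp
  have hfeq : ∀ t ∈ Ioi (0:ℝ), f t = f 1 * t ^ γ := by
    intro t ht
    have ht0 : (0:ℝ) < t := ht
    have := hconst t ht
    have hne : t ^ γ ≠ 0 := (Real.rpow_pos_of_pos ht0 _).ne'
    have h1 : H 1 = f 1 := by simp [hH]
    rw [h1] at this
    simp only [hH] at this
    rw [Real.rpow_neg ht0.le] at this
    field_simp at this
    exact this.trans (mul_comm _ _)
  -- show f 1 = 0 by continuity at 0
  have hf1 : f 1 = 0 := by
    by_contra hne
    have hrt : Tendsto (fun t : ℝ => t ^ γ) (𝓝[>] (0:ℝ)) atTop := by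
      have h1 : Tendsto (fun x : ℝ => x ^ (-γ)) atTop atTop :=
        tendsto_rpow_atTop (by linarith)
      have h2 := h1.comp tendsto_inv_nhdsGT_zero
      refine h2.congr' ?_
      filter_upwards [self_mem_nhdsWithin] with x hx
      have hx0 : (0:ℝ) < x := hx
      rw [Function.comp_apply, ← Real.rpow_neg_one, ← Real.rpow_mul hx0.le]
      norm_num
    have hcont : Tendsto f (𝓝[>] (0:ℝ)) (𝓝 (f 0)) :=
      (hf.continuous.continuousAt).continuousWithinAt
    rcases lt_or_gt_of_ne hne with hneg | hpos
    · have h3 : Tendsto (fun t : ℝ => f 1 * t ^ γ) (𝓝[>] (0:ℝ)) atBot :=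
        hrt.const_mul_atTop_of_neg hneg
      have h4 : Tendsto f (𝓝[>] (0:ℝ)) atBot := by
        refine h3.congr' ?_
        filter_upwards [self_mem_nhdsWithin] with x hx
        exact (hfeq x hx).symm
      exact not_tendsto_atBot_of_tendsto_nhds hcont h4
    · have h3 : Tendsto (fun t : ℝ => f 1 * t ^ γ) (𝓝[>] (0:ℝ)) atTop :=
        hrt.const_mul_atTop hpos
      have h4 : Tendsto f (𝓝[>] (0:ℝ)) atTop := by
        refine h3.congr' ?_
        filter_upwards [self_mem_nhdsWithin] with x hx
        exact (hfeq x hx).symm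
      exact not_tendsto_atTop_of_tendsto_nhds hcont h4
  intro t ht
  rw [hfeq t ht, hf1, zero_mul]

-- f vanishes everywhere
lemma all_zero (γ : ℝ) (hγ : γ < 0) (f : ℝ → ℝ) (hf : ContDiff ℝ SM f)
    (hode : ∀ t : ℝ, t * deriv f t = γ * f t) : ∀ t : ℝ, f t = 0 := by
  have hpos := pos_side γ hγ f hf hode
  have hneg : ∀ t > (0:ℝ), f (-t) = 0 := by
    have hf' : ContDiff ℝ SM (fun t => f (-t)) := hf.comp contDiff_neg
    have hode' : ∀ t : ℝ, t * deriv (fun t => f (-t)) t = γ * f (-t) := by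
      intro t
      rw [deriv_comp_neg]
      have := hode (-t)
      linarith [this]
    exact pos_side γ hγ _ hf' hode'
  intro t
  rcases lt_trichotomy t 0 with h | h | h
  · have := hneg (-t) (by linarith)
    simpa using this
  · have := hode 0
    rw [h]
    simp at this
    rcases this with h1 | h1
    · linarith
    · exact h1
  · exact hpos t h

-- iterated derivative identity
lemma iter_ode (β : ℝ) (f : ℝ → ℝ) (hf : ContDiff ℝ SM f)
    (hode : ∀ t : ℝ, t * deriv f t = β * f t) (k : ℕ) :
    ∀ t : ℝ, t * deriv (deriv^[k] f) t = (β - k) * deriv^[k] f t := by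
  induction k with
  | zero => simpa using hode
  | succ k ih =>
    intro t
    have hFs : ContDiff ℝ SM (deriv^[k] f) := hf.iterate_deriv k
    have hF'd : Differentiable ℝ (deriv (deriv^[k] f)) :=
      ((contDiff_infty_iff_deriv.mp hFs).2).differentiable (by simp)
    have hFd : Differentiable ℝ (deriv^[k] f) := hFs.differentiable (by simp)
    have heq : (fun t : ℝ => t * deriv (deriv^[k] f) t)
        = fun t : ℝ => (β - k) * deriv^[k] f t := funext ih
    have hL : HasDerivAt (fun t : ℝ => t * deriv (deriv^[k] f) t)
        (1 * deriv (deriv^[k] f) t + t * deriv (deriv (deriv^[k] f)) t) t :=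
      (hasDerivAt_id t).mul (hF'd t).hasDerivAt
    have hR : HasDerivAt (fun t : ℝ => (β - k) * deriv^[k] f t)
        ((β - k) * deriv (deriv^[k] f) t) t :=
      ((hFd t).hasDerivAt).const_mul _
    rw [heq] at hL
    have := hL.unique hR
    rw [Function.iterate_succ_apply']
    push_cast
    linarith [this]

theorem smooth_solution_is_linear
    (α₁ α₂ α₃ : ℝ) (h₁ : α₁ < 0) (h₃ : α₃ < 0)
    (β : ℝ) (hβ : β = α₃ / α₁) (hβint : ∀ k : ℤ, β ≠ (k : ℝ))
    (b₀ : ℝ → ℝ) (hsmooth : ContDiff ℝ (⊤ : ℕ∞) b₀)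
    (hode : ∀ t : ℝ, α₃ * b₀ t + α₁ * t * (α₂ - deriv b₀ t) = 0) :
    ∀ t : ℝ, b₀ t = α₂ / (1 - β) * t := by
  have hβpos : 0 < β := by rw [hβ]; exact div_pos_of_neg_of_neg h₃ h₁
  have h1β : (1:ℝ) - β ≠ 0 := by
    have := hβint 1; intro h; apply this; push_cast; linarith
  set c := α₂ / (1 - β) with hc
  set g : ℝ → ℝ := fun t => b₀ t - c * t with hg
  have hgsmooth : ContDiff ℝ (⊤ : ℕ∞) g := hsmooth.sub (contDiff_const.mul contDiff_id)
  have hderivg : ∀ t, deriv g t = deriv b₀ t - c := by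
    intro t
    rw [hg]
    rw [deriv_fun_sub ((hsmooth.differentiable (by simp)) t) (by fun_prop)]
    have : deriv (fun t : ℝ => c * t) t = c := by
      simpa using ((hasDerivAt_id t).const_mul c).deriv
    rw [this]
  have hgode : ∀ t : ℝ, t * deriv g t = β * g t := by
    intro t
    have h0 := hode t
    have hα₃ : α₃ = β * α₁ := by rw [hβ, div_mul_cancel₀ _ (ne_of_lt h₁)]
    rw [hderivg, hg]
    rw [hα₃] at h0
    have hα₁ : α₁ ≠ 0 := ne_of_lt h₁
    have h2 : β * b₀ t + t * α₂ - t * deriv b₀ t = 0 := by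
      have h4 : α₁ * (β * b₀ t + t * α₂ - t * deriv b₀ t) = 0 := by linear_combination h0
      exact (mul_eq_zero.mp h4).resolve_left hα₁
    have hcval : β * c + α₂ - c = 0 := by
      rw [hc]; field_simp; ring
    have h3 : t * (β * c + α₂ - c) = 0 := by rw [hcval]; ring
    show t * (deriv b₀ t - c) = β * (b₀ t - c * t)
    linear_combination (-1 : ℝ) * h2 + h3
  -- choose n = ⌈β⌉₊
  set n := ⌈β⌉₊ with hn
  have hβn : β - n < 0 := by
    have h1 : β ≤ n := Nat.le_ceil β
    have h2 : β ≠ n := by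
      have := hβint n; push_cast at this ⊢; exact this
    have : β < n := lt_of_le_of_ne h1 h2
    linarith
  have htop : deriv^[n] g = fun _ => 0 := by
    funext t
    have hg' : ContDiff ℝ SM g := hgsmooth.of_le (by simp)
    exact all_zero (β - n) hβn _ (hg'.iterate_deriv n)
      (iter_ode β g hg' hgode n) t
  -- downward induction
  have hdown : ∀ j : ℕ, deriv^[n - j] g = fun _ => 0 := by
    intro j
    induction j with
    | zero => simpa using htop
    | succ j ih =>
      by_cases hj : j + 1 ≤ n
      · have hm : n - j = (n - (j+1)) + 1 := by omega
        set m := n - (j+1) with hmdef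
        funext t
        have hiter := iter_ode β g (hgsmooth.of_le (by simp)) hgode m t
        have hder : deriv (deriv^[m] g) = deriv^[m+1] g :=
          (Function.iterate_succ_apply' deriv m g).symm
        rw [hder, ← hm, ih] at hiter
        simp only at hiter
        have hβm : β - m ≠ 0 := by
          have := hβint m; push_cast at this; intro h; apply this; linarith
        have := hiter.symm
        rw [mul_zero] at hiter
        have := mul_eq_zero.mp hiter.symm
        rcases this with h | h
        · exact absurd h hβm
        · exact h
      · have : n - (j+1) = n - j := by omega
        rw [this]; exact ih
  have hg0 : ∀ t, g t = 0 := by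
    have := hdown n
    simp at this
    intro t; exact congrFun this t
  intro t
  have h2 : b₀ t - c * t = 0 := hg0 t
  rw [hc] at h2
  linarith
end

section
/- Let α₁*, α₂*, α₃*, ε > 0 be constants, and suppose (p, b, y, v, z, λ_N) solve the compliant model system ṗ = α₁*, ḃ = α₂* - α₃*·λ_N, ẏ = v, v̇ = b + p·λ_N, ε·ż = -z - ε²·λ_N, with ε²·λ_N = z - y and p(0) = 0 (so p(t) = α₁*·t). Then b satisfies the single fourth-order ODE α₃*·b + α₁*·t·(α₂* - b') + ε·[α₃*·b' + α₁*·(α₂* - b') - α₁*·t·b''] - 2ε²·b''' - ε³·b'''' = 0. -/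
theorem reduction_to_fourth_order_ode
    (α₁ α₂ α₃ ε : ℝ) (hε : 0 < ε)
    (p b y v z lamN : ℝ → ℝ)
    (hp : ContDiff ℝ (⊤ : ℕ∞) p) (hb : ContDiff ℝ (⊤ : ℕ∞) b) (hy : ContDiff ℝ (⊤ : ℕ∞) y)
    (hv : ContDiff ℝ (⊤ : ℕ∞) v) (hz : ContDiff ℝ (⊤ : ℕ∞) z) (hlam : ContDiff ℝ (⊤ : ℕ∞) lamN)
    (hpe : ∀ t, deriv p t = α₁)
    (hbe : ∀ t, deriv b t = α₂ - α₃ * lamN t)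
    (hye : ∀ t, deriv y t = v t)
    (hve : ∀ t, deriv v t = b t + p t * lamN t)
    (hze : ∀ t, ε * deriv z t = -z t - ε ^ 2 * lamN t)
    (hle : ∀ t, ε ^ 2 * lamN t = z t - y t)
    (hp0 : p 0 = 0) :
    ∀ t : ℝ,
      α₃ * b t + α₁ * t * (α₂ - deriv b t)
        + ε * (α₃ * deriv b t + α₁ * (α₂ - deriv b t) - α₁ * t * iteratedDeriv 2 b t)
        - 2 * ε ^ 2 * iteratedDeriv 3 b t - ε ^ 3 * iteratedDeriv 4 b t = 0 := by
  -- differentiability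
  have step : ∀ {f : ℝ → ℝ}, ContDiff ℝ (⊤ : ℕ∞) f → ContDiff ℝ (⊤ : ℕ∞) (deriv f) := by
    intro f hf
    rw [show (((⊤ : ℕ∞) : WithTop ℕ∞)) = ((⊤ : ℕ∞) : WithTop ℕ∞) + 1 from rfl] at hf
    exact (contDiff_succ_iff_deriv.mp hf).2.2
  have dp : Differentiable ℝ p := hp.differentiable (by simp)
  have db : Differentiable ℝ b := hb.differentiable (by simp)
  have dy : Differentiable ℝ y := hy.differentiable (by simp)
  have dv : Differentiable ℝ v := hv.differentiable (by simp)
  have dz : Differentiable ℝ z := hz.differentiable (by simp)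
  have dl : Differentiable ℝ lamN := hlam.differentiable (by simp)
  have hl1 : ContDiff ℝ (⊤ : ℕ∞) (deriv lamN) := step hlam
  have dl1 : Differentiable ℝ (deriv lamN) := hl1.differentiable (by simp)
  have hl2 : ContDiff ℝ (⊤ : ℕ∞) (deriv (deriv lamN)) := step hl1
  have dl2 : Differentiable ℝ (deriv (deriv lamN)) := hl2.differentiable (by simp)
  have hv1 : ContDiff ℝ (⊤ : ℕ∞) (deriv v) := step hv
  have dv1 : Differentiable ℝ (deriv v) := hv1.differentiable (by simp)
  have hz1 : ContDiff ℝ (⊤ : ℕ∞) (deriv z) := step hz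
  have dz1 : Differentiable ℝ (deriv z) := hz1.differentiable (by simp)
  have hz2 : ContDiff ℝ (⊤ : ℕ∞) (deriv (deriv z)) := step hz1
  have dz2 : Differentiable ℝ (deriv (deriv z)) := hz2.differentiable (by simp)
  -- p t = α₁ t
  have hP : ∀ s, p s = α₁ * s := by
    intro s
    have hd : Differentiable ℝ (fun t => p t - α₁ * t) :=
      dp.sub (differentiable_fun_id.const_mul α₁)
    have h0 : ∀ x, deriv (fun t => p t - α₁ * t) x = 0 := by
      intro x
      rw [deriv_fun_sub (dp x) ((differentiable_fun_id.const_mul α₁) x), hpe,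
        deriv_const_mul _ differentiableAt_fun_id, deriv_id'']
      ring
    have := is_const_of_deriv_eq_zero hd h0 s 0
    simp [hp0] at this
    linarith
  -- second derivative of b
  have Hb : deriv b = fun s => α₂ - α₃ * lamN s := funext hbe
  have e2 : ∀ s, deriv (deriv b) s = -(α₃ * deriv lamN s) := by
    intro s
    rw [Hb, deriv_const_sub, deriv_const_mul _ (dl s)]
  have Hb2 : deriv (deriv b) = fun s => -(α₃ * deriv lamN s) := funext e2
  have e3 : ∀ s, deriv (deriv (deriv b)) s = -(α₃ * deriv (deriv lamN) s) := by
    intro s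
    rw [Hb2]
    simp [deriv_const_mul _ (dl1 s)]
  have Hb3 : deriv (deriv (deriv b)) = fun s => -(α₃ * deriv (deriv lamN) s) := funext e3
  have e4 : ∀ s, deriv (deriv (deriv (deriv b))) s = -(α₃ * deriv (deriv (deriv lamN)) s) := by
    intro s
    rw [Hb3]
    simp [deriv_const_mul _ (dl2 s)]
  -- second derivative of v
  have Hv : deriv v = fun s => b s + p s * lamN s := funext hve
  have e6 : ∀ s, deriv (deriv v) s = deriv b s + (α₁ * lamN s + p s * deriv lamN s) := by
    intro s
    rw [Hv, deriv_fun_add (db s) ((dp s).fun_mul (dl s)), deriv_fun_mul (dp s) (dl s), hpe]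
  -- from hle: ε² λ' = z' - v, then ε² λ'' = z'' - v', ε² λ''' = z''' - v''
  have Hle : (fun s => ε ^ 2 * lamN s) = fun s => z s - y s := funext hle
  have f1 : ∀ s, ε ^ 2 * deriv lamN s = deriv z s - v s := by
    intro s
    have := congrArg (fun f => deriv f s) Hle
    rw [deriv_const_mul _ (dl s), deriv_fun_sub (dz s) (dy s), hye] at this
    exact this
  have Hf1 : (fun s => ε ^ 2 * deriv lamN s) = fun s => deriv z s - v s := funext f1
  have f2 : ∀ s, ε ^ 2 * deriv (deriv lamN) s = deriv (deriv z) s - deriv v s := by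
    intro s
    have := congrArg (fun f => deriv f s) Hf1
    rw [deriv_const_mul _ (dl1 s), deriv_fun_sub (dz1 s) (dv s)] at this
    exact this
  have Hf2 : (fun s => ε ^ 2 * deriv (deriv lamN) s)
      = fun s => deriv (deriv z) s - deriv v s := funext f2
  have f3 : ∀ s, ε ^ 2 * deriv (deriv (deriv lamN)) s
      = deriv (deriv (deriv z)) s - deriv (deriv v) s := by
    intro s
    have := congrArg (fun f => deriv f s) Hf2
    rw [deriv_const_mul _ (dl2 s), deriv_fun_sub (dz2 s) (dv1 s)] at this
    exact this
  -- from hze, differentiate twice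
  have Hze : (fun s => ε * deriv z s) = fun s => -z s - ε ^ 2 * lamN s := funext hze
  have g1 : ∀ s, ε * deriv (deriv z) s = -deriv z s - ε ^ 2 * deriv lamN s := by
    intro s
    have := congrArg (fun f => deriv f s) Hze
    rw [deriv_const_mul _ (dz1 s), deriv_fun_sub ((dz s).fun_neg) ((dl s).const_mul _),
      deriv_const_mul _ (dl s), deriv.fun_neg] at this
    exact this
  have Hg1 : (fun s => ε * deriv (deriv z) s)
      = fun s => -deriv z s - ε ^ 2 * deriv lamN s := funext g1
  have g2 : ∀ s, ε * deriv (deriv (deriv z)) s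
      = -deriv (deriv z) s - ε ^ 2 * deriv (deriv lamN) s := by
    intro s
    have := congrArg (fun f => deriv f s) Hg1
    rw [deriv_const_mul _ (dz2 s), deriv_fun_sub ((dz1 s).fun_neg) ((dl1 s).const_mul _),
      deriv_const_mul _ (dl1 s), deriv.fun_neg] at this
    exact this
  intro t
  have key : deriv v t + ε * deriv (deriv v) t + 2 * ε ^ 2 * deriv (deriv lamN) t
      + ε ^ 3 * deriv (deriv (deriv lamN)) t = 0 := by
    linear_combination f2 t + ε * f3 t + g2 t
  have hit : iteratedDeriv 2 b t = deriv (deriv b) t ∧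
      iteratedDeriv 3 b t = deriv (deriv (deriv b)) t ∧
      iteratedDeriv 4 b t = deriv (deriv (deriv (deriv b))) t := by
    refine ⟨?_, ?_, ?_⟩ <;>
      simp [iteratedDeriv_succ, iteratedDeriv_one]
  obtain ⟨i2, i3, i4⟩ := hit
  rw [i2, i3, i4]
  linear_combination α₃ * key - α₃ * (hve t) - α₃ * ε * (e6 t) - 2 * ε ^ 2 * (e3 t)
    - ε ^ 3 * (e4 t) - ε * α₁ * t * (e2 t) - (α₁ * t + ε * α₁) * (hbe t)
    - α₃ * (lamN t + ε * deriv lamN t) * (hP t)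
end

section
/- Let β be real. The formal series h(τ, β) = 3^{β/3 - 1}·(-τ)^β · Σ_{k=0}^{N} 1/(k!·3^k·(-τ)^{3k}·Γ(1 + β - 3k)), truncated at any finite N, satisfies the ODE θ''' - τ θ' + β θ = 0 up to a remainder of order O((-τ)^{β - 3N - 2}) as τ → -∞. -/
open Filter Asymptotics

/-- The truncated formal asymptotic series `h(τ, β)` (with the convention
`1/Γ(x) = 0` at nonpositive integers `x`, automatic since `Real.Gamma`
vanishes there). -/
noncomputable def hTrunc (β : ℝ) (N : ℕ) (τ : ℝ) : ℝ :=
  (3 : ℝ) ^ (β / 3 - 1) * (-τ) ^ β *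
    ∑ k ∈ Finset.range (N + 1),
      1 / ((k.factorial : ℝ) * 3 ^ k * (-τ) ^ (3 * k) * Real.Gamma (1 + β - 3 * (k : ℝ)))

/-!
Write `x = -τ`. The operator `θ ↦ θ''' - τ θ' + β θ` sends `x ^ e` to
`(β - e) x ^ e - e (e - 1) (e - 2) x ^ (e - 3)`. For the exponents `e_k = β - 3k` of `h`, the
recurrence `Γ(s) = (s - 1)(s - 2)(s - 3) Γ(s - 3)` makes the coefficients
`a_k = seriesCoeff β k` satisfy `3 (k + 1) a_{k+1} = e_k (e_k - 1) (e_k - 2) a_k`, so the images of the terms telescope: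
only `-3 (N + 1) a_{N+1} x ^ (β - 3N - 3)` survives.
-/

open Set

/-- The reciprocal Gamma recurrence; it also holds at the poles, where `Real.Gamma` is `0`. -/
theorem Real.inv_Gamma_eq_self_mul_inv_Gamma_add_one (s : ℝ) :
    (Real.Gamma s)⁻¹ = s * (Real.Gamma (s + 1))⁻¹ := by
  rcases ne_or_eq s 0 with hs | rfl
  · rw [Real.Gamma_add_one hs, mul_inv, mul_inv_cancel_left₀ hs]
  · rw [zero_add, Real.Gamma_zero, inv_zero, zero_mul]

noncomputable def seriesCoeff (β : ℝ) (k : ℕ) : ℝ :=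
  (3 : ℝ) ^ (β / 3 - 1) / ((k.factorial : ℝ) * 3 ^ k) * (Real.Gamma (1 + β - 3 * k))⁻¹

theorem Real.inv_Gamma_sub_three (s : ℝ) :
    (Real.Gamma (s - 3))⁻¹ = (s - 1) * (s - 2) * (s - 3) * (Real.Gamma s)⁻¹ := by
  rw [Real.inv_Gamma_eq_self_mul_inv_Gamma_add_one (s - 3),
    Real.inv_Gamma_eq_self_mul_inv_Gamma_add_one (s - 3 + 1),
    Real.inv_Gamma_eq_self_mul_inv_Gamma_add_one (s - 3 + 1 + 1),
    show s - 3 + 1 + 1 + 1 = s by ring]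
  ring

theorem seriesCoeff_succ (β : ℝ) (k : ℕ) :
    3 * ((k : ℝ) + 1) * seriesCoeff β (k + 1) =
      (β - 3 * k) * (β - 3 * k - 1) * (β - 3 * k - 2) * seriesCoeff β k := by
  have hΓ : (Real.Gamma (1 + β - 3 * ((k + 1 : ℕ) : ℝ)))⁻¹ =
      (β - 3 * k) * (β - 3 * k - 1) * (β - 3 * k - 2) * (Real.Gamma (1 + β - 3 * k))⁻¹ := by
    rw [show 1 + β - 3 * ((k + 1 : ℕ) : ℝ) = 1 + β - 3 * k - 3 by push_cast; ring,
      Real.inv_Gamma_sub_three]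
    ring
  unfold seriesCoeff
  rw [hΓ]
  push_cast [Nat.factorial_succ, pow_succ]
  field_simp

noncomputable def negPowSum (s : Finset ℕ) (c e : ℕ → ℝ) (τ : ℝ) : ℝ :=
  ∑ k ∈ s, c k * (-τ) ^ e k

theorem hasDerivAt_negPowSum (s : Finset ℕ) (c e : ℕ → ℝ) {τ : ℝ} (hτ : τ < 0) :
    HasDerivAt (negPowSum s c e)
      (negPowSum s (fun k => -(c k * e k)) (fun k => e k - 1) τ) τ := by
  refine HasDerivAt.fun_sum fun k _ => ?_
  have hpow := (Real.hasDerivAt_rpow_const (p := e k) (Or.inl (neg_ne_zero.2 hτ.ne))).comp τ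
    (hasDerivAt_neg τ)
  exact (hpow.const_mul (c k)).congr_deriv (by ring)

theorem eqOn_deriv_of_eqOn_negPowSum {f : ℝ → ℝ} {s : Finset ℕ} {c e : ℕ → ℝ}
    (hf : EqOn f (negPowSum s c e) (Iio 0)) :
    EqOn (deriv f) (negPowSum s (fun k => -(c k * e k)) (fun k => e k - 1)) (Iio 0) := by
  intro τ hτ
  rw [(hf.eventuallyEq_of_mem (Iio_mem_nhds hτ)).deriv_eq]
  exact (hasDerivAt_negPowSum s c e hτ).deriv

theorem hTrunc_eqOn_negPowSum (β : ℝ) (N : ℕ) :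
    EqOn (hTrunc β N)
      (negPowSum (Finset.range (N + 1)) (seriesCoeff β) (fun k => β - 3 * k)) (Iio 0) := by
  intro τ hτ
  have hx : 0 < -τ := neg_pos.2 hτ
  rw [hTrunc, negPowSum, Finset.mul_sum]
  refine Finset.sum_congr rfl fun k _ => ?_
  rw [Real.rpow_sub hx, show (3 : ℝ) * k = ((3 * k : ℕ) : ℝ) by push_cast; ring,
    Real.rpow_natCast, seriesCoeff]
  push_cast
  simp only [div_eq_mul_inv, mul_inv, one_mul]
  ring

noncomputable def innerOperator (β : ℝ) (θ : ℝ → ℝ) (τ : ℝ) : ℝ :=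
  iteratedDeriv 3 θ τ - τ * deriv θ τ + β * θ τ

theorem innerOperator_eq_of_eqOn_negPowSum (β : ℝ) {f : ℝ → ℝ} {s : Finset ℕ} {c e : ℕ → ℝ}
    (hf : EqOn f (negPowSum s c e) (Iio 0)) {τ : ℝ} (hτ : τ < 0) :
    innerOperator β f τ = ∑ k ∈ s, c k *
      ((β - e k) * (-τ) ^ e k - e k * (e k - 1) * (e k - 2) * (-τ) ^ (e k - 3)) := by
  have hf' := eqOn_deriv_of_eqOn_negPowSum hf
  have hf'' := eqOn_deriv_of_eqOn_negPowSum hf'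
  have hf''' := eqOn_deriv_of_eqOn_negPowSum hf''
  have hx : -τ ≠ 0 := neg_ne_zero.2 hτ.ne
  simp only [innerOperator, iteratedDeriv_eq_iterate, Function.iterate_succ,
    Function.iterate_zero, Function.comp_def, id]
  rw [hf''' hτ, hf' hτ, hf hτ]
  simp only [negPowSum, Finset.mul_sum, ← Finset.sum_sub_distrib, ← Finset.sum_add_distrib]
  refine Finset.sum_congr rfl fun k _ => ?_
  rw [show e k - 1 - 1 - 1 = e k - 3 by ring, Real.rpow_sub_one hx]
  field_simp [hτ.ne]
  ring

theorem innerOperator_hTrunc (β : ℝ) (N : ℕ) {τ : ℝ} (hτ : τ < 0) :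
    innerOperator β (hTrunc β N) τ =
      -(3 * ((N : ℝ) + 1) * seriesCoeff β (N + 1)) * (-τ) ^ (β - 3 * N - 3) := by
  set v : ℕ → ℝ := fun k => 3 * k * seriesCoeff β k * (-τ) ^ (β - 3 * k) with hv
  have hshift (k : ℕ) : β - 3 * ((k + 1 : ℕ) : ℝ) = β - 3 * k - 3 := by push_cast; ring
  have hterm (k : ℕ) : seriesCoeff β k * ((β - (β - 3 * k)) * (-τ) ^ (β - 3 * k) -
      (β - 3 * k) * (β - 3 * k - 1) * (β - 3 * k - 2) * (-τ) ^ (β - 3 * k - 3)) =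
      v k - v (k + 1) := by
    simp only [hv, hshift]
    push_cast
    rw [seriesCoeff_succ]
    ring
  rw [innerOperator_eq_of_eqOn_negPowSum β (hTrunc_eqOn_negPowSum β N) hτ,
    Finset.sum_congr rfl fun k _ => hterm k, Finset.sum_range_sub']
  simp only [hv, hshift]
  push_cast
  ring

theorem isBigO_neg_rpow_atBot {a b : ℝ} (hab : a ≤ b) :
    (fun τ : ℝ => (-τ) ^ a) =O[atBot] fun τ => (-τ) ^ b := by
  refine Eventually.isBigO ?_
  filter_upwards [eventually_le_atBot (-1)] with τ hτ
  rw [Real.norm_of_nonneg (Real.rpow_nonneg (by linarith) a)]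
  exact Real.rpow_le_rpow_of_exponent_le (by linarith) hab

theorem truncated_series_asymptotic_solution (β : ℝ) (N : ℕ) :
    (fun τ : ℝ =>
        iteratedDeriv 3 (hTrunc β N) τ - τ * deriv (hTrunc β N) τ + β * hTrunc β N τ)
      =O[atBot] fun τ : ℝ => (-τ) ^ (β - 3 * (N : ℝ) - 2) := by
  have hremainder : innerOperator β (hTrunc β N) =ᶠ[atBot]
      fun τ => -(3 * ((N : ℝ) + 1) * seriesCoeff β (N + 1)) * (-τ) ^ (β - 3 * N - 3) := by
    filter_upwards [eventually_lt_atBot 0] with τ hτ using innerOperator_hTrunc β N hτ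
  exact hremainder.trans_isBigO ((isBigO_neg_rpow_atBot (by linarith)).const_mul_left _)
end

section
/- Consider the planar linear system p' = α₁·p, b' = α₂·p + α₃·b with real constants satisfying α₂ < 0 and α₁ < α₃ < 0 (Case I). Then every initial condition with p(0) > 0 and b(0) < 0 gives a solution with p(ŝ) > 0 and b(ŝ) < 0 for all ŝ ≥ 0, and (p(ŝ), b(ŝ)) → (0,0) with b(ŝ)/p(ŝ) → -∞ as ŝ → ∞. -/
open Filter Real Topology

/-!
The first equation gives `p s = p 0 * exp (α₁ * s)`. With `c = α₂ / (α₁ - α₃) > 0`, the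
combination `b - c * p` solves `q' = α₃ * q`, so `b s = c * p s + q₀ * exp (α₃ * s)` with
`q₀ = b 0 - c * p 0 < 0`. For `s ≥ 0` we have `exp (α₁ * s) ≤ exp (α₃ * s)`, whence
`b s ≤ b 0 * exp (α₃ * s) < 0`; and `b s / p s = c + (q₀ / p 0) * exp ((α₃ - α₁) * s) → -∞`.
-/

theorem eq_mul_exp_of_hasDerivAt {a : ℝ} {f : ℝ → ℝ} (hf : ∀ s, HasDerivAt f (a * f s) s)
    (s : ℝ) : f s = f 0 * exp (a * s) := by
  have hderiv : ∀ t, HasDerivAt (fun t => f t * exp (-a * t)) 0 t := fun t =>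
    ((hf t).mul ((hasDerivAt_id' t).const_mul (-a)).exp).congr_deriv (by ring)
  have hconst : f s * exp (-a * s) = f 0 * exp (-a * 0) :=
    is_const_of_deriv_eq_zero (fun t => (hderiv t).differentiableAt) (fun t => (hderiv t).deriv) s 0
  rw [mul_zero, exp_zero, mul_one, neg_mul, exp_neg, ← div_eq_mul_inv, div_eq_iff (exp_ne_zero _)]
    at hconst
  exact hconst

theorem tendsto_exp_const_mul_atTop_nhds_zero {a : ℝ} (ha : a < 0) :
    Tendsto (fun s => exp (a * s)) atTop (𝓝 0) :=
  tendsto_exp_comp_nhds_zero.mpr (tendsto_id.const_mul_atTop_of_neg ha)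

section LinearSystem

variable {α₁ α₂ α₃ : ℝ} {p b : ℝ → ℝ}

theorem sub_div_mul_eq_mul_exp (h : α₁ ≠ α₃) (hp : ∀ s, HasDerivAt p (α₁ * p s) s)
    (hb : ∀ s, HasDerivAt b (α₂ * p s + α₃ * b s) s) (s : ℝ) :
    b s - α₂ / (α₁ - α₃) * p s = (b 0 - α₂ / (α₁ - α₃) * p 0) * exp (α₃ * s) := by
  have hsub : α₁ - α₃ ≠ 0 := sub_ne_zero.mpr h
  refine eq_mul_exp_of_hasDerivAt (f := fun t => b t - α₂ / (α₁ - α₃) * p t) (fun t => ?_) s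
  exact ((hb t).sub ((hp t).const_mul (α₂ / (α₁ - α₃)))).congr_deriv (by field_simp; ring)

theorem div_eq_div_mul_exp_add (h : α₁ ≠ α₃) (hp : ∀ s, HasDerivAt p (α₁ * p s) s)
    (hb : ∀ s, HasDerivAt b (α₂ * p s + α₃ * b s) s) (hp0 : p 0 ≠ 0) (s : ℝ) :
    b s / p s = (b 0 - α₂ / (α₁ - α₃) * p 0) / p 0 * exp ((α₃ - α₁) * s) + α₂ / (α₁ - α₃) := by
  have hb_eq := sub_div_mul_eq_mul_exp h hp hb s
  rw [eq_mul_exp_of_hasDerivAt hp s] at hb_eq ⊢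
  rw [sub_eq_iff_eq_add.mp hb_eq, sub_mul α₃, exp_sub]
  field_simp

end LinearSystem

theorem caseI_dynamic_jam
    (α₁ α₂ α₃ : ℝ) (h₂ : α₂ < 0) (h₁₃ : α₁ < α₃) (h₃ : α₃ < 0)
    (p b : ℝ → ℝ)
    (hp : ∀ s : ℝ, HasDerivAt p (α₁ * p s) s)
    (hb : ∀ s : ℝ, HasDerivAt b (α₂ * p s + α₃ * b s) s)
    (hp0 : 0 < p 0) (hb0 : b 0 < 0) :
    (∀ s : ℝ, 0 ≤ s → 0 < p s ∧ b s < 0) ∧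
    Tendsto (fun s => (p s, b s)) atTop (nhds (0, 0)) ∧
    Tendsto (fun s => b s / p s) atTop atBot := by
  set c := α₂ / (α₁ - α₃)
  set q₀ := b 0 - c * p 0
  have hc : 0 < c := div_pos_of_neg_of_neg h₂ (by linarith)
  have hq₀ : q₀ < 0 := sub_neg_of_lt (hb0.trans (mul_pos hc hp0))
  have hp_eq : ∀ s, p s = p 0 * exp (α₁ * s) := eq_mul_exp_of_hasDerivAt hp
  have hb_eq : ∀ s, b s = c * p s + q₀ * exp (α₃ * s) := fun s => by
    linarith [sub_div_mul_eq_mul_exp h₁₃.ne hp hb s]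
  refine ⟨fun s hs => ⟨by rw [hp_eq]; positivity, ?_⟩, ?_, ?_⟩
  · have hp_le : p s ≤ p 0 * exp (α₃ * s) := by
      rw [hp_eq]; gcongr
    calc b s ≤ c * (p 0 * exp (α₃ * s)) + q₀ * exp (α₃ * s) := by rw [hb_eq]; gcongr
      _ = b 0 * exp (α₃ * s) := by ring
      _ < 0 := mul_neg_of_neg_of_pos hb0 (exp_pos _)
  · have hp_lim : Tendsto p atTop (𝓝 0) := by
      simpa [← hp_eq] using (tendsto_exp_const_mul_atTop_nhds_zero (h₁₃.trans h₃)).const_mul (p 0)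
    have hb_lim : Tendsto b atTop (𝓝 0) := by
      simpa [← hb_eq] using (hp_lim.const_mul c).add
        ((tendsto_exp_const_mul_atTop_nhds_zero h₃).const_mul q₀)
    exact hp_lim.prodMk_nhds hb_lim
  · simp only [div_eq_div_mul_exp_add h₁₃.ne hp hb hp0.ne']
    refine tendsto_atBot_add_const_right _ c (Tendsto.const_mul_atTop_of_neg ?_ ?_)
    · exact div_neg_of_neg_of_pos hq₀ hp0
    · exact tendsto_exp_atTop.comp (tendsto_id.const_mul_atTop (sub_pos.mpr h₁₃))
end
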